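/- Let λ ∈ ℂ with λ ≠ 1 and λ ≠ −1, and let r_λ be the complex Lie algebra on ℂ³ with brackets [e₁,e₃]=e₁, [e₂,e₃]=λe₂ (all other basis brackets zero). Then the space of derivations of r_λ has dimension 4, H²(r_λ; r_λ) has dimension 1, and H³(r_λ; r_λ) = 0. -/
import Mathlib


noncomputable section

/-- The underlying vector space `ℂ³`. -/
abbrev E3 : Type := Fin 3 → ℂ

/-- The standard basis vectors of `ℂ³`. -/
def e1 : E3 := ![1, 0, 0]
def e2 : E3 := ![0, 1, 0]
def e3 : E3 := ![0, 0, 1]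

/-- The unique antisymmetric bilinear bracket on `ℂ³` with `[e₁,e₂] = c12`,
`[e₁,e₃] = c13`, `[e₂,e₃] = c23`. -/
def br (c12 c13 c23 : E3) (u v : E3) : E3 :=
  (u 0 * v 1 - u 1 * v 0) • c12 + (u 0 * v 2 - u 2 * v 0) • c13 +
    (u 1 * v 2 - u 2 * v 1) • c23

/-- The Jacobi identity for a bracket. -/
def Jacobi (b : E3 → E3 → E3) : Prop :=
  ∀ u v w : E3, b (b u v) w + b (b v w) u + b (b w u) v = 0

/-- `f : ℂ³ → ℂ³` is ℂ-linear. -/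
def IsLin (f : E3 → E3) : Prop :=
  ∀ (a : ℂ) (x y : E3), f (a • x + y) = a • f x + f y

/-- `φ : ℂ³ × ℂ³ → ℂ³` is ℂ-bilinear. -/
def IsBil (φ : E3 → E3 → E3) : Prop :=
  (∀ (a : ℂ) (x x' y : E3), φ (a • x + x') y = a • φ x y + φ x' y) ∧
  (∀ (a : ℂ) (x y y' : E3), φ x (a • y + y') = a • φ x y + φ x y')

/-- `φ` is alternating (as a 2-cochain). -/
def IsAlt2 (φ : E3 → E3 → E3) : Prop := ∀ x : E3, φ x x = 0

/-- `ψ : (ℂ³)³ → ℂ³` is ℂ-trilinear. -/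
def IsTril (ψ : E3 → E3 → E3 → E3) : Prop :=
  (∀ (a : ℂ) (x x' y z : E3), ψ (a • x + x') y z = a • ψ x y z + ψ x' y z) ∧
  (∀ (a : ℂ) (x y y' z : E3), ψ x (a • y + y') z = a • ψ x y z + ψ x y' z) ∧
  (∀ (a : ℂ) (x y z z' : E3), ψ x y (a • z + z') = a • ψ x y z + ψ x y z')

/-- `ψ` is alternating (as a 3-cochain): it vanishes whenever two arguments coincide. -/
def IsAlt3 (ψ : E3 → E3 → E3 → E3) : Prop :=
  ∀ x y : E3, ψ x x y = 0 ∧ ψ x y y = 0 ∧ ψ x y x = 0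

/-- The coboundary of a 1-cochain `f`, with respect to the bracket `b`:
`(δf)(x,y) = [x, f y] − [y, f x] − f [x,y]`. -/
def cb1 (b : E3 → E3 → E3) (f : E3 → E3) : E3 → E3 → E3 :=
  fun x y => b x (f y) - b y (f x) - f (b x y)

/-- The coboundary of a 2-cochain `φ`, with respect to the bracket `b`:
`(δφ)(x,y,z) = [x, φ(y,z)] − [y, φ(x,z)] + [z, φ(x,y)] − φ([x,y],z) + φ([x,z],y) − φ([y,z],x)`. -/
def cb2 (b : E3 → E3 → E3) (φ : E3 → E3 → E3) : E3 → E3 → E3 → E3 :=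
  fun x y z =>
    b x (φ y z) - b y (φ x z) + b z (φ x y) - φ (b x y) z + φ (b x z) y - φ (b y z) x

/-- `f` is a derivation of the bracket `b`. -/
def IsDeriv (b : E3 → E3 → E3) (f : E3 → E3) : Prop :=
  IsLin f ∧ ∀ x y : E3, f (b x y) = b (f x) y + b x (f y)

/-- The space of derivations of the bracket `b`.  (The set of derivations is already a
ℂ-subspace, so taking its span does not change it.) -/
def DerSpace (b : E3 → E3 → E3) : Submodule ℂ (E3 → E3) :=
  Submodule.span ℂ {f : E3 → E3 | IsDeriv b f}

/-- The space of 2-cocycles with adjoint coefficients. -/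
def Z2 (b : E3 → E3 → E3) : Submodule ℂ (E3 → E3 → E3) :=
  Submodule.span ℂ {φ : E3 → E3 → E3 | IsBil φ ∧ IsAlt2 φ ∧ cb2 b φ = 0}

/-- The space of 2-coboundaries with adjoint coefficients. -/
def B2 (b : E3 → E3 → E3) : Submodule ℂ (E3 → E3 → E3) :=
  Submodule.span ℂ {φ : E3 → E3 → E3 | ∃ f : E3 → E3, IsLin f ∧ φ = cb1 b f}

/-- The space of all 3-cochains (alternating trilinear maps); every 3-cochain is a
3-cocycle since `dim = 3`. -/
def C3 : Submodule ℂ (E3 → E3 → E3 → E3) :=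
  Submodule.span ℂ {ψ : E3 → E3 → E3 → E3 | IsTril ψ ∧ IsAlt3 ψ}

/-- The space of 3-coboundaries with adjoint coefficients. -/
def B3 (b : E3 → E3 → E3) : Submodule ℂ (E3 → E3 → E3 → E3) :=
  Submodule.span ℂ
    {ψ : E3 → E3 → E3 → E3 | ∃ φ : E3 → E3 → E3, IsBil φ ∧ IsAlt2 φ ∧ ψ = cb2 b φ}

/-- The dimension of `H²(L;L)`: cocycles modulo coboundaries. -/
def H2dim (b : E3 → E3 → E3) : ℕ :=
  Module.finrank ℂ (Z2 b ⧸ (B2 b).comap (Z2 b).subtype)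

/-- The dimension of `H³(L;L)`: 3-cochains modulo coboundaries of 2-cochains. -/
def H3dim (b : E3 → E3 → E3) : ℕ :=
  Module.finrank ℂ (C3 ⧸ (B3 b).comap C3.subtype)

open Submodule


lemma vec_decomp (x : E3) : x = x 0 • e1 + x 1 • e2 + x 2 • e3 := by
  funext i; fin_cases i <;> simp [e1, e2, e3]

lemma lin_zero {f : E3 → E3} (hf : IsLin f) : f 0 = 0 := by
  have h := hf 1 0 0
  simp at h
  exact h

lemma lin_apply {f : E3 → E3} (hf : IsLin f) (x : E3) :
    f x = x 0 • f e1 + x 1 • f e2 + x 2 • f e3 := by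
  conv_lhs => rw [vec_decomp x]
  rw [show x 0 • e1 + x 1 • e2 + x 2 • e3 = x 0 • e1 + (x 1 • e2 + (x 2 • e3 + 0)) by
    rw [add_zero, add_assoc]]
  rw [hf, hf, hf, lin_zero hf, add_zero, add_assoc]
lemma e1_0 : e1 0 = 1 := rfl
lemma e1_1 : e1 1 = 0 := rfl
lemma e1_2 : e1 2 = 0 := rfl
lemma e2_0 : e2 0 = 0 := rfl
lemma e2_1 : e2 1 = 1 := rfl
lemma e2_2 : e2 2 = 0 := rfl
lemma e3_0 : e3 0 = 0 := rfl
lemma e3_1 : e3 1 = 0 := rfl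
lemma e3_2 : e3 2 = 1 := rfl
lemma bil_zero_left {φ : E3 → E3 → E3} (hb : IsBil φ) (y : E3) : φ 0 y = 0 := by
  have h := hb.1 1 0 0 y; simp at h; exact h

lemma bil_zero_right {φ : E3 → E3 → E3} (hb : IsBil φ) (x : E3) : φ x 0 = 0 := by
  have h := hb.2 1 x 0 0; simp at h; exact h

lemma bil_left {φ : E3 → E3 → E3} (hb : IsBil φ) (x y : E3) :
    φ x y = x 0 • φ e1 y + x 1 • φ e2 y + x 2 • φ e3 y := by
  conv_lhs => rw [vec_decomp x]
  rw [show x 0 • e1 + x 1 • e2 + x 2 • e3 = x 0 • e1 + (x 1 • e2 + (x 2 • e3 + 0)) by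
    rw [add_zero, add_assoc]]
  rw [hb.1, hb.1, hb.1, bil_zero_left hb, add_zero, add_assoc]

lemma bil_right {φ : E3 → E3 → E3} (hb : IsBil φ) (x y : E3) :
    φ x y = y 0 • φ x e1 + y 1 • φ x e2 + y 2 • φ x e3 := by
  conv_lhs => rw [vec_decomp y]
  rw [show y 0 • e1 + y 1 • e2 + y 2 • e3 = y 0 • e1 + (y 1 • e2 + (y 2 • e3 + 0)) by
    rw [add_zero, add_assoc]]
  rw [hb.2, hb.2, hb.2, bil_zero_right hb, add_zero, add_assoc]

lemma bil_skew {φ : E3 → E3 → E3} (hb : IsBil φ) (ha : IsAlt2 φ) (x y : E3) :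
    φ y x = - φ x y := by
  have h := ha (x + y)
  rw [show x + y = (1:ℂ) • x + y by rw [one_smul]] at h
  rw [hb.1] at h
  rw [show (1:ℂ) • x + y = (1:ℂ) • x + y from rfl] at h
  rw [hb.2 1 x x y, hb.2 1 y x y, ha x, ha y, one_smul, one_smul] at h
  simp at h
  exact eq_neg_of_add_eq_zero_right h

/-- A bilinear alternating 2-cochain is determined by its basis values, via `br`. -/
lemma bil_rep {φ : E3 → E3 → E3} (hb : IsBil φ) (ha : IsAlt2 φ) :
    φ = br (φ e1 e2) (φ e1 e3) (φ e2 e3) := by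
  funext x y
  rw [bil_left hb, bil_right hb e1 y, bil_right hb e2 y, bil_right hb e3 y]
  rw [ha e1, ha e2, ha e3, bil_skew hb ha e1 e2, bil_skew hb ha e1 e3, bil_skew hb ha e2 e3]
  funext i
  simp [br, Pi.add_apply, Pi.smul_apply, smul_eq_mul]
  ring

lemma br_bil (u v w : E3) : IsBil (br u v w) := by
  constructor <;> intro a x x' y <;> funext i <;>
    simp [br, Pi.add_apply, Pi.smul_apply, smul_eq_mul] <;> ring

lemma br_alt (u v w : E3) : IsAlt2 (br u v w) := by
  intro x; funext i; simp [br]; ring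
section Tril
variable {ψ : E3 → E3 → E3 → E3}

lemma tril_zero1 (h : IsTril ψ) (y z : E3) : ψ 0 y z = 0 := by
  have h' := h.1 1 0 0 y z; simp at h'; exact h'
lemma tril_zero2 (h : IsTril ψ) (x z : E3) : ψ x 0 z = 0 := by
  have h' := h.2.1 1 x 0 0 z; simp at h'; exact h'
lemma tril_zero3 (h : IsTril ψ) (x y : E3) : ψ x y 0 = 0 := by
  have h' := h.2.2 1 x y 0 0; simp at h'; exact h'

lemma tril1 (h : IsTril ψ) (x y z : E3) :
    ψ x y z = x 0 • ψ e1 y z + x 1 • ψ e2 y z + x 2 • ψ e3 y z := by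
  conv_lhs => rw [vec_decomp x]
  rw [show x 0 • e1 + x 1 • e2 + x 2 • e3 = x 0 • e1 + (x 1 • e2 + (x 2 • e3 + 0)) by
    rw [add_zero, add_assoc]]
  rw [h.1, h.1, h.1, tril_zero1 h, add_zero, add_assoc]

lemma tril2 (h : IsTril ψ) (x y z : E3) :
    ψ x y z = y 0 • ψ x e1 z + y 1 • ψ x e2 z + y 2 • ψ x e3 z := by
  conv_lhs => rw [vec_decomp y]
  rw [show y 0 • e1 + y 1 • e2 + y 2 • e3 = y 0 • e1 + (y 1 • e2 + (y 2 • e3 + 0)) by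
    rw [add_zero, add_assoc]]
  rw [h.2.1, h.2.1, h.2.1, tril_zero2 h, add_zero, add_assoc]

lemma tril3 (h : IsTril ψ) (x y z : E3) :
    ψ x y z = z 0 • ψ x y e1 + z 1 • ψ x y e2 + z 2 • ψ x y e3 := by
  conv_lhs => rw [vec_decomp z]
  rw [show z 0 • e1 + z 1 • e2 + z 2 • e3 = z 0 • e1 + (z 1 • e2 + (z 2 • e3 + 0)) by
    rw [add_zero, add_assoc]]
  rw [h.2.2, h.2.2, h.2.2, tril_zero3 h, add_zero, add_assoc]

lemma tril_swap12 (h : IsTril ψ) (ha : IsAlt3 ψ) (x y z : E3) : ψ y x z = - ψ x y z := by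
  have h' := (ha (x + y) z).1
  rw [show x + y = (1:ℂ) • x + y by rw [one_smul]] at h'
  rw [h.1] at h'
  rw [h.2.1 1 x x y z, h.2.1 1 y x y z, (ha x z).1, (ha y z).1, one_smul, one_smul] at h'
  simp at h'
  exact eq_neg_of_add_eq_zero_right h'

lemma tril_swap23 (h : IsTril ψ) (ha : IsAlt3 ψ) (x y z : E3) : ψ x z y = - ψ x y z := by
  have h' := (ha x (y + z)).2.1
  rw [show y + z = (1:ℂ) • y + z by rw [one_smul]] at h'
  rw [h.2.1] at h'
  rw [h.2.2 1 x y y z, h.2.2 1 x z y z, (ha x y).2.1, (ha x z).2.1, one_smul, one_smul] at h'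
  simp at h'
  exact eq_neg_of_add_eq_zero_right h'

lemma tril_swap13 (h : IsTril ψ) (ha : IsAlt3 ψ) (x y z : E3) : ψ z y x = - ψ x y z := by
  have h' := (ha (x + z) y).2.2
  rw [show x + z = (1:ℂ) • x + z by rw [one_smul]] at h'
  rw [h.1] at h'
  rw [h.2.2 1 x y x z, h.2.2 1 z y x z, (ha x y).2.2, (ha z y).2.2, one_smul, one_smul] at h'
  simp at h'
  exact eq_neg_of_add_eq_zero_right h'

/-- The determinant coefficient of `(x,y,z)` w.r.t. the standard basis. -/
def det3 (x y z : E3) : ℂ :=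
  x 0 * (y 1 * z 2 - y 2 * z 1) - x 1 * (y 0 * z 2 - y 2 * z 0) + x 2 * (y 0 * z 1 - y 1 * z 0)

lemma tril_rep (h : IsTril ψ) (ha : IsAlt3 ψ) (x y z : E3) :
    ψ x y z = det3 x y z • ψ e1 e2 e3 := by
  have k1 : ∀ a b : E3, ψ a a b = 0 := fun a b => (ha a b).1
  have k2 : ∀ a b : E3, ψ a b b = 0 := fun a b => (ha a b).2.1
  have k3 : ∀ a b : E3, ψ a b a = 0 := fun a b => (ha a b).2.2
  have p213 : ψ e2 e1 e3 = - ψ e1 e2 e3 := tril_swap12 h ha e1 e2 e3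
  have p132 : ψ e1 e3 e2 = - ψ e1 e2 e3 := tril_swap23 h ha e1 e2 e3
  have p321 : ψ e3 e2 e1 = - ψ e1 e2 e3 := tril_swap13 h ha e1 e2 e3
  have p231 : ψ e2 e3 e1 = ψ e1 e2 e3 := by
    rw [tril_swap12 h ha e3 e2 e1, p321]; ring_nf
  have p312 : ψ e3 e1 e2 = ψ e1 e2 e3 := by
    rw [tril_swap12 h ha e1 e3 e2, p132]; ring_nf
  rw [tril1 h x y z,
    tril2 h e1 y z, tril2 h e2 y z, tril2 h e3 y z,
    tril3 h e1 e1 z, tril3 h e1 e2 z, tril3 h e1 e3 z,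
    tril3 h e2 e1 z, tril3 h e2 e2 z, tril3 h e2 e3 z,
    tril3 h e3 e1 z, tril3 h e3 e2 z, tril3 h e3 e3 z]
  simp only [k1, k2, k3, p213, p132, p321, p231, p312]
  funext i
  simp [det3, Pi.add_apply, Pi.smul_apply, smul_eq_mul, Pi.neg_apply, Pi.zero_apply]
  ring
end Tril
section Der
variable (lam : ℂ)

/-- Basis brackets. -/
lemma bb12 : br 0 e1 (lam • e2) e1 e2 = 0 := by
  funext i; fin_cases i <;> simp [br, e1, e2]
lemma bb13 : br 0 e1 (lam • e2) e1 e3 = e1 := by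
  funext i; fin_cases i <;> simp [br, e1, e2, e3]
lemma bb23 : br 0 e1 (lam • e2) e2 e3 = lam • e2 := by
  funext i; fin_cases i <;> simp [br, e1, e2, e3]

/-- A spanning family for the derivations. -/
def Dfam : Fin 4 → (E3 → E3) :=
  ![fun x => x 0 • e1, fun x => x 1 • e2, fun x => x 2 • e1, fun x => x 2 • e2]

lemma Dfam_deriv (i : Fin 4) : IsDeriv (br 0 e1 (lam • e2)) (Dfam i) := by
  fin_cases i <;>
  refine ⟨fun a x y => by
      funext j; fin_cases j <;>
        simp [Dfam, e1, e2, Matrix.vecHead, Matrix.vecTail] <;> ring,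
    fun x y => by
      funext j; fin_cases j <;>
        simp [Dfam, br, e1, e2, e3, Matrix.vecHead, Matrix.vecTail] <;> ring⟩

lemma Dfam_li : LinearIndependent ℂ (Dfam) := by
  rw [Fintype.linearIndependent_iff]
  intro g hg
  have h10 := congrFun (congrFun hg e1) 0
  have h21 := congrFun (congrFun hg e2) 1
  have h30 := congrFun (congrFun hg e3) 0
  have h31 := congrFun (congrFun hg e3) 1
  simp [Fin.sum_univ_four, Dfam, e1, e2, e3, Matrix.vecHead, Matrix.vecTail] at h10 h21 h30 h31
  intro i; fin_cases i <;> simpa using ‹_›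
lemma bb_apply (lam : ℂ) (x y : E3) :
    br 0 e1 (lam • e2) x y
      = ![x 0 * y 2 - x 2 * y 0, lam * (x 1 * y 2 - x 2 * y 1), 0] := by
  funext i; fin_cases i <;> simp [br, e1, e2, Matrix.vecHead, Matrix.vecTail] <;> ring

lemma lin_smul {f : E3 → E3} (hf : IsLin f) (a : ℂ) (x : E3) : f (a • x) = a • f x := by
  have h := hf a x 0
  rw [add_zero, lin_zero hf, add_zero] at h
  exact h

lemma der_span (lam : ℂ) (h1 : lam ≠ 1) :
    DerSpace (br 0 e1 (lam • e2)) = Submodule.span ℂ (Set.range (Dfam)) := by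
  apply le_antisymm
  · rw [DerSpace, Submodule.span_le]
    rintro f ⟨hl, hd⟩
    have h13 := hd e1 e3
    have h23 := hd e2 e3
    have h12 := hd e1 e2
    rw [bb13 lam, bb_apply lam (f e1) e3, bb_apply lam e1 (f e3)] at h13
    rw [bb23 lam, lin_smul hl, bb_apply lam (f e2) e3, bb_apply lam e2 (f e3)] at h23
    rw [bb12 lam, lin_zero hl, bb_apply lam (f e1) e2, bb_apply lam e1 (f e2)] at h12
    have c130 := congrFun h13 0
    have c131 := congrFun h13 1
    have c132 := congrFun h13 2
    have c230 := congrFun h23 0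
    have c120 := congrFun h12 0
    simp [e1_0, e1_1, e1_2, e2_0, e2_1, e2_2, e3_0, e3_1, e3_2, Matrix.vecHead, Matrix.vecTail] at c130 c131 c132 c230 c120
    have hA1 : f e1 1 = 0 := by
      rcases mul_eq_zero.mp (show (lam - 1) * f e1 1 = 0 by linear_combination -c131) with h | h
      · exact absurd (by linear_combination h) h1
      · exact h
    have hB0 : f e2 0 = 0 := by
      rcases mul_eq_zero.mp (show (lam - 1) * f e2 0 = 0 by linear_combination c230) with h | h
      · exact absurd (by linear_combination h) h1
      · exact h
    have hf : f = f e1 0 • Dfam 0 + f e2 1 • Dfam 1 + f e3 0 • Dfam 2 + f e3 1 • Dfam 3 := by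
      funext x
      rw [lin_apply hl x]
      funext j
      fin_cases j <;>
        simp [Dfam, e1_0, e1_1, e1_2, e2_0, e2_1, e2_2, e3_0, e3_1, e3_2, smul_eq_mul,
          Matrix.vecHead, Matrix.vecTail, hA1, hB0, c130, c132, c120.symm] <;> ring
    rw [hf]
    refine add_mem (add_mem (add_mem ?_ ?_) ?_) ?_ <;>
      exact Submodule.smul_mem _ _ (Submodule.subset_span ⟨_, rfl⟩)
  · rw [Submodule.span_le]
    rintro f ⟨i, rfl⟩
    exact Submodule.subset_span (Dfam_deriv lam i)

lemma der_dim (lam : ℂ) (h1 : lam ≠ 1) :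
    Module.finrank ℂ (DerSpace (br 0 e1 (lam • e2))) = 4 := by
  rw [der_span lam h1, finrank_span_eq_card Dfam_li]
  simp
end Der
lemma cb2_br (lam : ℂ) (u v w : E3) :
    cb2 (br 0 e1 (lam • e2)) (br u v w) = fun x y z =>
      det3 x y z • ![w 2 + lam * u 0, u 1 - lam * v 2, (1 + lam) * u 2] := by
  funext x y z i
  fin_cases i <;>
    simp [cb2, br, det3, e1_0, e1_1, e1_2, e2_0, e2_1, e2_2, e3_0, e3_1, e3_2,
      Matrix.vecHead, Matrix.vecTail] <;> ring
section Z2sec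

lemma zmem (lam : ℂ) (u v w : E3)
    (h : (![w 2 + lam * u 0, u 1 - lam * v 2, (1 + lam) * u 2] : E3) = 0) :
    br u v w ∈ {φ : E3 → E3 → E3 | IsBil φ ∧ IsAlt2 φ ∧ cb2 (br 0 e1 (lam • e2)) φ = 0} :=
  ⟨br_bil _ _ _, br_alt _ _ _, by rw [cb2_br, h]; funext x y z; simp⟩

/-- Spanning family of the 2-cocycles. -/
def Zfam (lam : ℂ) : Fin 6 → (E3 → E3 → E3) :=
  ![br e1 0 (-lam • e3), br 0 e1 0, br 0 e2 0, br (lam • e2) e3 0, br 0 0 e1, br 0 0 e2]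

lemma Zfam_mem (lam : ℂ) (i : Fin 6) :
    Zfam lam i ∈ {φ : E3 → E3 → E3 | IsBil φ ∧ IsAlt2 φ ∧ cb2 (br 0 e1 (lam • e2)) φ = 0} := by
  fin_cases i <;>
  · apply zmem
    funext j; fin_cases j <;>
      simp [e1_0, e1_1, e1_2, e2_0, e2_1, e2_2, e3_0, e3_1, e3_2,
        Matrix.vecHead, Matrix.vecTail] <;> ring
end Z2sec

lemma Zfam_0 (lam : ℂ) : Zfam lam 0 = br e1 0 (-lam • e3) := rfl
lemma Zfam_1 (lam : ℂ) : Zfam lam 1 = br 0 e1 0 := rfl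
lemma Zfam_2 (lam : ℂ) : Zfam lam 2 = br 0 e2 0 := rfl
lemma Zfam_3 (lam : ℂ) : Zfam lam 3 = br (lam • e2) e3 0 := rfl
lemma Zfam_4 (lam : ℂ) : Zfam lam 4 = br 0 0 e1 := rfl
lemma Zfam_5 (lam : ℂ) : Zfam lam 5 = br 0 0 e2 := rfl
lemma Zfam_li (lam : ℂ) : LinearIndependent ℂ (Zfam lam) := by
  rw [Fintype.linearIndependent_iff]
  intro g hg
  have a0 := congrFun (congrFun (congrFun hg e1) e2) 0
  have a1 := congrFun (congrFun (congrFun hg e1) e3) 0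
  have a2 := congrFun (congrFun (congrFun hg e1) e3) 1
  have a3 := congrFun (congrFun (congrFun hg e1) e3) 2
  have a4 := congrFun (congrFun (congrFun hg e2) e3) 0
  have a5 := congrFun (congrFun (congrFun hg e2) e3) 1
  simp [Fin.sum_univ_six, Zfam_0, Zfam_1, Zfam_2, Zfam_3, Zfam_4, Zfam_5, br, e1_0, e1_1, e1_2, e2_0, e2_1, e2_2, e3_0, e3_1, e3_2,
    Matrix.vecHead, Matrix.vecTail] at a0 a1 a2 a3 a4 a5
  intro i; fin_cases i <;> simpa using ‹_›

lemma Z2_span (lam : ℂ) (h2 : lam ≠ -1) :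
    Z2 (br 0 e1 (lam • e2)) = Submodule.span ℂ (Set.range (Zfam lam)) := by
  apply le_antisymm
  · rw [Z2, Submodule.span_le]
    rintro φ ⟨hb, ha, hc⟩
    rw [bil_rep hb ha, cb2_br] at hc
    have k0 := congrFun (congrFun (congrFun (congrFun hc e1) e2) e3) 0
    have k1 := congrFun (congrFun (congrFun (congrFun hc e1) e2) e3) 1
    have k2 := congrFun (congrFun (congrFun (congrFun hc e1) e2) e3) 2
    simp [det3, e1_0, e1_1, e1_2, e2_0, e2_1, e2_2, e3_0, e3_1, e3_2,
      Matrix.vecHead, Matrix.vecTail] at k0 k1 k2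
    have hu2 : φ e1 e2 2 = 0 := by
      rcases k2 with h | h
      · exact absurd (by linear_combination h) h2
      · exact h
    have hrep : φ = φ e1 e2 0 • Zfam lam 0 + φ e1 e3 0 • Zfam lam 1 +
        φ e1 e3 1 • Zfam lam 2 + φ e1 e3 2 • Zfam lam 3 +
        φ e2 e3 0 • Zfam lam 4 + φ e2 e3 1 • Zfam lam 5 := by
      conv_lhs => rw [bil_rep hb ha]
      funext x y j
      fin_cases j <;>
        simp [Zfam_0, Zfam_1, Zfam_2, Zfam_3, Zfam_4, Zfam_5, br, e1_0, e1_1, e1_2, e2_0, e2_1, e2_2, e3_0, e3_1, e3_2,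
          Matrix.vecHead, Matrix.vecTail]
      · ring
      · linear_combination (x 0 * y 1 - x 1 * y 0) * k1
      · linear_combination (x 0 * y 1 - x 1 * y 0) * hu2 + (x 1 * y 2 - x 2 * y 1) * k0
    rw [hrep]
    refine add_mem (add_mem (add_mem (add_mem (add_mem ?_ ?_) ?_) ?_) ?_) ?_ <;>
      exact Submodule.smul_mem _ _ (Submodule.subset_span ⟨_, rfl⟩)
  · rw [Submodule.span_le]
    rintro φ ⟨i, rfl⟩
    exact Submodule.subset_span (Zfam_mem lam i)

lemma Z2_dim (lam : ℂ) (h2 : lam ≠ -1) :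
    Module.finrank ℂ (Z2 (br 0 e1 (lam • e2))) = 6 := by
  rw [Z2_span lam h2, finrank_span_eq_card (Zfam_li lam)]
  simp
/-- Spanning family of the 2-coboundaries. -/
def Bfam (lam : ℂ) : Fin 5 → (E3 → E3 → E3) :=
  ![br 0 0 ((1 - lam) • e1), br 0 ((lam - 1) • e2) 0, br (-lam • e2) (-e3) 0,
    br e1 0 (-lam • e3), br 0 e1 (lam • e2)]

lemma Bfam_0 (lam : ℂ) : Bfam lam 0 = br 0 0 ((1 - lam) • e1) := rfl
lemma Bfam_1 (lam : ℂ) : Bfam lam 1 = br 0 ((lam - 1) • e2) 0 := rfl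
lemma Bfam_2 (lam : ℂ) : Bfam lam 2 = br (-lam • e2) (-e3) 0 := rfl
lemma Bfam_3 (lam : ℂ) : Bfam lam 3 = br e1 0 (-lam • e3) := rfl
lemma Bfam_4 (lam : ℂ) : Bfam lam 4 = br 0 e1 (lam • e2) := rfl

/-- The coboundary of a linear 1-cochain, written in `br` form. -/
lemma cb1_rep (lam : ℂ) {f : E3 → E3} (hf : IsLin f) :
    cb1 (br 0 e1 (lam • e2)) f =
      br ![f e2 2, -(lam * f e1 2), 0]
         ![f e3 2, (lam - 1) * f e1 1, -(f e1 2)]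
         ![(1 - lam) * f e2 0, lam * f e3 2, -(lam * f e2 2)] := by
  funext x y
  show br 0 e1 (lam • e2) x (f y) - br 0 e1 (lam • e2) y (f x) - f (br 0 e1 (lam • e2) x y) = _
  rw [lin_apply hf x, lin_apply hf y, lin_apply hf (br 0 e1 (lam • e2) x y)]
  funext j
  fin_cases j <;>
    simp [br, e1_0, e1_1, e1_2, e2_0, e2_1, e2_2, e3_0, e3_1, e3_2,
      Matrix.vecHead, Matrix.vecTail] <;> ring
lemma Bfam_mem (lam : ℂ) (i : Fin 5) :
    Bfam lam i ∈ {φ : E3 → E3 → E3 | ∃ f : E3 → E3, IsLin f ∧ φ = cb1 (br 0 e1 (lam • e2)) f} := by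
  have simpset : True := trivial
  fin_cases i
  · refine ⟨fun x => x 1 • e1, fun a x y => by funext j; fin_cases j <;> simp [e1,e2,e3] <;> ring, ?_⟩
    rw [cb1_rep lam (f := fun x => x 1 • e1) (fun a x y => by
      funext j; fin_cases j <;> simp [e1, e2, e3] <;> ring)]
    funext x y j
    fin_cases j <;> simp [Bfam_0, Bfam_1, Bfam_2, Bfam_3, Bfam_4, br, e1_0, e1_1, e1_2, e2_0, e2_1, e2_2, e3_0, e3_1, e3_2,
      Matrix.vecHead, Matrix.vecTail] <;> ring
  · refine ⟨fun x => x 0 • e2, fun a x y => by funext j; fin_cases j <;> simp [e1,e2,e3] <;> ring, ?_⟩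
    rw [cb1_rep lam (f := fun x => x 0 • e2) (fun a x y => by
      funext j; fin_cases j <;> simp [e1, e2, e3] <;> ring)]
    funext x y j
    fin_cases j <;> simp [Bfam_0, Bfam_1, Bfam_2, Bfam_3, Bfam_4, br, e1_0, e1_1, e1_2, e2_0, e2_1, e2_2, e3_0, e3_1, e3_2,
      Matrix.vecHead, Matrix.vecTail] <;> ring
  · refine ⟨fun x => x 0 • e3, fun a x y => by funext j; fin_cases j <;> simp [e1,e2,e3] <;> ring, ?_⟩
    rw [cb1_rep lam (f := fun x => x 0 • e3) (fun a x y => by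
      funext j; fin_cases j <;> simp [e1, e2, e3] <;> ring)]
    funext x y j
    fin_cases j <;> simp [Bfam_0, Bfam_1, Bfam_2, Bfam_3, Bfam_4, br, e1_0, e1_1, e1_2, e2_0, e2_1, e2_2, e3_0, e3_1, e3_2,
      Matrix.vecHead, Matrix.vecTail] <;> ring
  · refine ⟨fun x => x 1 • e3, fun a x y => by funext j; fin_cases j <;> simp [e1,e2,e3] <;> ring, ?_⟩
    rw [cb1_rep lam (f := fun x => x 1 • e3) (fun a x y => by
      funext j; fin_cases j <;> simp [e1, e2, e3] <;> ring)]
    funext x y j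
    fin_cases j <;> simp [Bfam_0, Bfam_1, Bfam_2, Bfam_3, Bfam_4, br, e1_0, e1_1, e1_2, e2_0, e2_1, e2_2, e3_0, e3_1, e3_2,
      Matrix.vecHead, Matrix.vecTail] <;> ring
  · refine ⟨fun x => x 2 • e3, fun a x y => by funext j; fin_cases j <;> simp [e1,e2,e3] <;> ring, ?_⟩
    rw [cb1_rep lam (f := fun x => x 2 • e3) (fun a x y => by
      funext j; fin_cases j <;> simp [e1, e2, e3] <;> ring)]
    funext x y j
    fin_cases j <;> simp [Bfam_0, Bfam_1, Bfam_2, Bfam_3, Bfam_4, br, e1_0, e1_1, e1_2, e2_0, e2_1, e2_2, e3_0, e3_1, e3_2,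
      Matrix.vecHead, Matrix.vecTail] <;> ring
lemma Bfam_li (lam : ℂ) (h1 : lam ≠ 1) : LinearIndependent ℂ (Bfam lam) := by
  have hne : lam - 1 ≠ 0 := sub_ne_zero_of_ne h1
  rw [Fintype.linearIndependent_iff]
  intro g hg
  have b0 := congrFun (congrFun (congrFun hg e1) e2) 0
  have b1 := congrFun (congrFun (congrFun hg e1) e3) 2
  have b2 := congrFun (congrFun (congrFun hg e1) e3) 0
  have b3 := congrFun (congrFun (congrFun hg e1) e3) 1
  have b4 := congrFun (congrFun (congrFun hg e2) e3) 0
  simp [Fin.sum_univ_five, Bfam_0, Bfam_1, Bfam_2, Bfam_3, Bfam_4, br,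
    e1_0, e1_1, e1_2, e2_0, e2_1, e2_2, e3_0, e3_1, e3_2,
    Matrix.vecHead, Matrix.vecTail] at b0 b1 b2 b3 b4
  have hg3 : g 3 = 0 := b0
  have hg2 : g 2 = 0 := b1
  have hg4 : g 4 = 0 := b2
  have hg1 : g 1 = 0 := by
    rcases b3 with h | h
    · exact h
    · exact absurd h hne
  have hg0 : g 0 = 0 := by
    rcases b4 with h | h
    · exact h
    · exact absurd (by linear_combination -h) hne
  intro i; fin_cases i <;> simpa using ‹_›

lemma B2_span (lam : ℂ) :
    B2 (br 0 e1 (lam • e2)) = Submodule.span ℂ (Set.range (Bfam lam)) := by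
  apply le_antisymm
  · rw [B2, Submodule.span_le]
    rintro φ ⟨f, hf, rfl⟩
    have hrep : cb1 (br 0 e1 (lam • e2)) f = f e2 0 • Bfam lam 0 + f e1 1 • Bfam lam 1 +
        f e1 2 • Bfam lam 2 + f e2 2 • Bfam lam 3 + f e3 2 • Bfam lam 4 := by
      rw [cb1_rep lam hf]
      funext x y j
      fin_cases j <;> simp [Bfam_0, Bfam_1, Bfam_2, Bfam_3, Bfam_4, br,
        e1_0, e1_1, e1_2, e2_0, e2_1, e2_2, e3_0, e3_1, e3_2,
        Matrix.vecHead, Matrix.vecTail] <;> ring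
    rw [hrep]
    refine add_mem (add_mem (add_mem (add_mem ?_ ?_) ?_) ?_) ?_ <;>
      exact Submodule.smul_mem _ _ (Submodule.subset_span ⟨_, rfl⟩)
  · rw [Submodule.span_le]
    rintro φ ⟨i, rfl⟩
    exact Submodule.subset_span (Bfam_mem lam i)

lemma B2_dim (lam : ℂ) (h1 : lam ≠ 1) :
    Module.finrank ℂ (B2 (br 0 e1 (lam • e2))) = 5 := by
  rw [B2_span lam, finrank_span_eq_card (Bfam_li lam h1)]
  simp

lemma B2_le_Z2 (lam : ℂ) : B2 (br 0 e1 (lam • e2)) ≤ Z2 (br 0 e1 (lam • e2)) := by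
  rw [B2, Submodule.span_le]
  rintro φ ⟨f, hf, rfl⟩
  rw [cb1_rep lam hf]
  exact Submodule.subset_span (zmem lam _ _ _ (by
    funext j; fin_cases j <;> simp [e1_0, e1_1, e1_2, e2_0, e2_1, e2_2, e3_0, e3_1, e3_2,
      Matrix.vecHead, Matrix.vecTail] <;> ring))
set_option synthInstance.maxHeartbeats 1000000 in
set_option maxHeartbeats 1000000 in
lemma H2_eq_one (lam : ℂ) (h1 : lam ≠ 1) (h2 : lam ≠ -1) :
    H2dim (br 0 e1 (lam • e2)) = 1 := by
  haveI hfd : FiniteDimensional ℂ (Z2 (br 0 e1 (lam • e2))) := by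
    rw [Z2_span lam h2]
    exact FiniteDimensional.span_of_finite ℂ (Set.finite_range _)
  have h5 : Module.finrank ℂ
      ((B2 (br 0 e1 (lam • e2))).comap (Z2 (br 0 e1 (lam • e2))).subtype) = 5 := by
    rw [LinearEquiv.finrank_eq (Submodule.comapSubtypeEquivOfLe (B2_le_Z2 lam))]
    exact B2_dim lam h1
  have hq := Submodule.finrank_quotient_add_finrank
    ((B2 (br 0 e1 (lam • e2))).comap (Z2 (br 0 e1 (lam • e2))).subtype)
  rw [h5, Z2_dim lam h2] at hq
  unfold H2dim
  omega

lemma C3_le_B3 (lam : ℂ) (h2 : lam ≠ -1) : C3 ≤ B3 (br 0 e1 (lam • e2)) := by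
  have hne : (1 + lam) ≠ 0 := fun h => h2 (by linear_combination h)
  rw [C3, Submodule.span_le]
  rintro ψ ⟨ht, ha⟩
  refine Submodule.subset_span
    ⟨br ((ψ e1 e2 e3 1) • e2 + ((1 + lam)⁻¹ * ψ e1 e2 e3 2) • e3) 0 ((ψ e1 e2 e3 0) • e3),
      br_bil _ _ _, br_alt _ _ _, ?_⟩
  rw [cb2_br]
  funext x y z
  rw [tril_rep ht ha]
  congr 1
  funext j
  fin_cases j <;>
    simp [e1_0, e1_1, e1_2, e2_0, e2_1, e2_2, e3_0, e3_1, e3_2,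
      Matrix.vecHead, Matrix.vecTail]
  · field_simp
lemma H3_eq_zero (lam : ℂ) (h2 : lam ≠ -1) : H3dim (br 0 e1 (lam • e2)) = 0 := by
  haveI : Subsingleton (C3 ⧸ (B3 (br 0 e1 (lam • e2))).comap C3.subtype) :=
    Submodule.Quotient.subsingleton_iff.mpr
      (Submodule.comap_subtype_eq_top.mpr (C3_le_B3 lam h2))
  exact Module.finrank_zero_of_subsingleton

/-- For `λ ≠ 1`, `λ ≠ −1`, the Lie algebra `r_λ` with `[e₁,e₃]=e₁`, `[e₂,e₃]=λe₂`:
the space of derivations has dimension 4, `H²(r_λ;r_λ)` has dimension 1, and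
`H³(r_λ;r_λ) = 0`. -/
theorem r_lambda_generic_cohomology (lam : ℂ) (h1 : lam ≠ 1) (h2 : lam ≠ -1) :
    Module.finrank ℂ (DerSpace (br 0 e1 (lam • e2))) = 4 ∧
    H2dim (br 0 e1 (lam • e2)) = 1 ∧
    H3dim (br 0 e1 (lam • e2)) = 0 :=
  ⟨der_dim lam h1, H2_eq_one lam h1 h2, H3_eq_zero lam h2⟩
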